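/- arXiv:2504.09811 — 3 statements merged into one kernel-verified Lean document; each statement's English description precedes it below -/
import Mathlib

section
/- Let eta in (1/3, 1) and define C_0 > 0 by C_0^eta = 8/eta. Let G : [0, T] -> [0, infinity) be nonincreasing and satisfy G(s)^{1+eta} <= G(s-1) - G(s+1) for all s in [1, T-1]. If G(0) is sufficiently small (depending only on eta), then G(s) <= C_0 (G(0)^{-eta} + s)^{-1/eta} for all s in [0, T]. -/
open Set Real

lemma aux_bernoulli {η x : ℝ} (hη0 : 0 < η) (hη1 : η < 1) (hx0 : 0 < x) (hx : x ≤ 1/2) :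
    (1 + x) ^ (-η) ≤ 1 - (η/2) * x := by
  have h1x : (0:ℝ) < 1 + x := by linarith
  have hb : (1 + x) ^ (1 - η) ≤ 1 + (1 - η) * x :=
    rpow_one_add_le_one_add_mul_self (by linarith) (by linarith) (by linarith)
  have hpow_pos : (0:ℝ) < (1 + x) ^ η := Real.rpow_pos_of_pos h1x η
  have hsplit : (1 + x) ^ η * (1 + x) ^ (1 - η) = 1 + x := by
    rw [← Real.rpow_add h1x]; norm_num
  have hden : (0:ℝ) < 1 + (1 - η) * x := by nlinarith
  have hlow : (1 + x) / (1 + (1 - η) * x) ≤ (1 + x) ^ η := by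
    rw [div_le_iff₀ hden]
    calc (1:ℝ) + x = (1 + x) ^ η * (1 + x) ^ (1 - η) := hsplit.symm
    _ ≤ (1 + x) ^ η * (1 + (1 - η) * x) := mul_le_mul_of_nonneg_left hb hpow_pos.le
  have hkey : 1 ≤ (1 - (η/2) * x) * (1 + x) ^ η := by
    have hpos : (0:ℝ) ≤ 1 - (η/2) * x := by nlinarith
    have h2 : (1:ℝ) ≤ (1 - (η/2) * x) * ((1 + x) / (1 + (1 - η) * x)) := by
      rw [mul_div_assoc', le_div_iff₀ hden]
      nlinarith [mul_nonneg (mul_nonneg hη0.le hx0.le) (by linarith : (0:ℝ) ≤ 1 - x)]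
    calc (1:ℝ) ≤ (1 - (η/2) * x) * ((1 + x) / (1 + (1 - η) * x)) := h2
    _ ≤ (1 - (η/2) * x) * (1 + x) ^ η := mul_le_mul_of_nonneg_left hlow hpos
  rw [Real.rpow_neg h1x.le, inv_eq_one_div, div_le_iff₀ hpow_pos]
  linarith

/-- One step of the discrete decay: if `0 < c`, `c^η ≤ 1/2` and `c + c^(1+η) ≤ b`
then `b^(-η) + η/2 ≤ c^(-η)`. -/
lemma aux_step {η b c : ℝ} (hη0 : 0 < η) (hη1 : η < 1) (hc : 0 < c)
    (hx : c ^ η ≤ 1/2) (h : c + c ^ (1+η) ≤ b) : b ^ (-η) + η/2 ≤ c ^ (-η) := by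
  set x := c ^ η with hxdef
  have hx0 : 0 < x := Real.rpow_pos_of_pos hc η
  have hcb : c * (1 + x) ≤ b := by
    have : c ^ (1+η) = c * x := by
      rw [hxdef, Real.rpow_add hc, Real.rpow_one]
    nlinarith
  have hcbpos : 0 < c * (1 + x) := by positivity
  have hb1 : b ^ (-η) ≤ (c * (1 + x)) ^ (-η) :=
    Real.rpow_le_rpow_of_nonpos hcbpos hcb (by linarith)
  have hb2 : (c * (1 + x)) ^ (-η) = c ^ (-η) * (1 + x) ^ (-η) :=
    Real.mul_rpow hc.le (by linarith)
  have hbern := aux_bernoulli hη0 hη1 hx0 hx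
  have hcη : 0 < c ^ (-η) := Real.rpow_pos_of_pos hc _
  have hone : c ^ (-η) * x = 1 := by
    rw [hxdef, ← Real.rpow_add hc]; norm_num
  have : c ^ (-η) * (1 + x) ^ (-η) ≤ c ^ (-η) * (1 - (η/2) * x) :=
    mul_le_mul_of_nonneg_left hbern hcη.le
  have hfin : c ^ (-η) * (1 - (η/2) * x) = c ^ (-η) - η/2 := by
    have : c ^ (-η) * ((η/2) * x) = η/2 := by
      rw [mul_comm (η/2) x, ← mul_assoc, hone]; ring
    nlinarith [this]
  linarith [hb1, hb2 ▸ hb1]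

/-- Discrete Łojasiewicz decay: if `η ∈ (1/3,1)`, `C₀` is defined by `C₀^η = 8/η`
(so `C₀ = (8/η)^(1/η)`), and `G : [0,T] → [0,∞)` is nonincreasing and satisfies
`G(s)^{1+η} ≤ G(s-1) - G(s+1)` for `s ∈ [1, T-1]`, then for `G(0)` sufficiently small
(depending only on `η`) one has `G(s) ≤ C₀ (G(0)^{-η} + s)^{-1/η}` on `[0,T]`. -/
theorem discrete_lojasiewicz_decay (η : ℝ) (hη : η ∈ Ioo (1/3 : ℝ) 1) :
    ∃ δ > 0, ∀ (T : ℝ) (G : ℝ → ℝ),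
      (∀ s ∈ Icc (0:ℝ) T, 0 ≤ G s) →
      AntitoneOn G (Icc 0 T) →
      (∀ s ∈ Icc (1:ℝ) (T-1), G s ^ (1+η) ≤ G (s-1) - G (s+1)) →
      G 0 ≤ δ →
      ∀ s ∈ Icc (0:ℝ) T,
        G s ≤ (8/η) ^ (1/η) * (G 0 ^ (-η) + s) ^ (-1/η) := by
  obtain ⟨hη0', hη1⟩ := hη
  have hη0 : (0:ℝ) < η := by linarith
  refine ⟨((1:ℝ)/2) ^ (1/η), Real.rpow_pos_of_pos (by norm_num) _, ?_⟩
  intro T G hGnn hmono hrec hδ s hs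
  set δ : ℝ := ((1:ℝ)/2) ^ (1/η) with hδdef
  have hδη : δ ^ η = 1/2 := by
    rw [hδdef, ← Real.rpow_mul (by norm_num), div_mul_cancel₀ _ hη0.ne', Real.rpow_one]
  have hδpos : (0:ℝ) < δ := Real.rpow_pos_of_pos (by norm_num) _
  have hδ1 : δ < 1 := by
    rw [hδdef]
    exact Real.rpow_lt_one (by norm_num) (by norm_num) (by positivity)
  obtain ⟨hs0, hsT⟩ := hs
  -- trivial case `G s ≤ 0`
  rcases le_or_gt (G s) 0 with hGs | hGs
  · have hrhs : 0 ≤ (8/η) ^ (1/η) * (G 0 ^ (-η) + s) ^ (-1/η) := by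
      apply mul_nonneg (Real.rpow_nonneg (by positivity) _)
      apply Real.rpow_nonneg
      have := Real.rpow_nonneg (hGnn 0 ⟨le_refl 0, hs0.trans hsT⟩) (-η)
      linarith
    linarith
  -- general positivity along the chain
  have hGt_pos : ∀ t ∈ Icc (0:ℝ) s, 0 < G t := fun t ht =>
    lt_of_lt_of_le hGs (hmono ⟨ht.1, ht.2.trans hsT⟩ ⟨hs0, hsT⟩ ht.2)
  have hG0pos : 0 < G 0 := hGt_pos 0 ⟨le_refl 0, hs0⟩
  -- smallness along the chain
  have hsmall : ∀ t ∈ Icc (0:ℝ) T, G t ^ η ≤ 1/2 := by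
    intro t ht
    have h1 : G t ≤ δ := le_trans (hmono ⟨le_refl 0, hs0.trans hsT⟩ ht ht.1) hδ
    calc G t ^ η ≤ δ ^ η := Real.rpow_le_rpow (hGnn t ht) h1 hη0.le
    _ = 1/2 := hδη
  -- key induction
  have key : ∀ n : ℕ, ∀ t : ℝ, 0 ≤ t → t + 2*(n:ℝ) ≤ T → 0 < G (t + 2*(n:ℝ)) →
      G t ^ (-η) + (n:ℝ) * (η/2) ≤ G (t + 2*(n:ℝ)) ^ (-η) := by
    intro n
    induction n with
    | zero => intro t ht hle _; norm_num
    | succ n ih =>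
      intro t ht hle hpos
      have hcast : ((n:ℝ)+1) = ((n+1 : ℕ) : ℝ) := by push_cast; ring
      have hle' : t + 2*(n:ℝ) ≤ T := by push_cast at hle ⊢; linarith
      have hmem_a : t + 2*(n:ℝ) ∈ Icc (0:ℝ) T := ⟨by positivity, hle'⟩
      have heq : t + 2*((n:ℝ)+1) = (t + 2*(n:ℝ)) + 2 := by ring
      have hleT : (t + 2*(n:ℝ)) + 2 ≤ T := by push_cast at hle; linarith
      have hmem_c : (t + 2*(n:ℝ)) + 2 ∈ Icc (0:ℝ) T := ⟨by positivity, hleT⟩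
      have hmem_m : (t + 2*(n:ℝ)) + 1 ∈ Icc (0:ℝ) T := ⟨by positivity, by linarith⟩
      have hpos' : 0 < G ((t + 2*(n:ℝ)) + 2) := by
        have h := hpos; push_cast at h
        rwa [show t + 2*((n:ℝ)+1) = (t + 2*(n:ℝ)) + 2 from by ring] at h
      have hga : 0 < G (t + 2*(n:ℝ)) :=
        lt_of_lt_of_le hpos' (hmono hmem_a hmem_c (by linarith))
      have hih := ih t ht hle' hga
      -- one more step
      have hrec' := hrec ((t + 2*(n:ℝ)) + 1) ⟨by linarith, by linarith⟩
      have hsub1 : (t + 2*(n:ℝ)) + 1 - 1 = t + 2*(n:ℝ) := by ring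
      have hsub2 : (t + 2*(n:ℝ)) + 1 + 1 = (t + 2*(n:ℝ)) + 2 := by ring
      rw [hsub1, hsub2] at hrec'
      have hmono1 : G ((t + 2*(n:ℝ)) + 2) ≤ G ((t + 2*(n:ℝ)) + 1) :=
        hmono hmem_m hmem_c (by linarith)
      have hpow : G ((t + 2*(n:ℝ)) + 2) ^ (1+η) ≤ G ((t + 2*(n:ℝ)) + 1) ^ (1+η) :=
        Real.rpow_le_rpow (hGnn _ hmem_c) hmono1 (by linarith)
      have hstep : G ((t + 2*(n:ℝ)) + 2) + G ((t + 2*(n:ℝ)) + 2) ^ (1+η) ≤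
          G (t + 2*(n:ℝ)) := by linarith
      have := aux_step hη0 hη1 hpos' (hsmall _ hmem_c) hstep
      have hgoal : G t ^ (-η) + ((n:ℝ)+1) * (η/2) ≤ G ((t + 2*(n:ℝ)) + 2) ^ (-η) := by
        linarith
      rw [← heq] at hgoal
      push_cast
      convert hgoal using 4
  -- apply with n = ⌊s/2⌋₊
  set n : ℕ := ⌊s/2⌋₊ with hndef
  have hn1 : (n:ℝ) ≤ s/2 := Nat.floor_le (by positivity)
  have hn2 : s/2 < (n:ℝ) + 1 := Nat.lt_floor_add_one _
  set t : ℝ := s - 2*(n:ℝ) with htdef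
  have ht0 : 0 ≤ t := by rw [htdef]; linarith
  have hts : t + 2*(n:ℝ) = s := by rw [htdef]; ring
  have hkey := key n t ht0 (by rw [hts]; exact hsT) (by rw [hts]; exact hGs)
  rw [hts] at hkey
  -- compare G t with G 0
  have htmem : t ∈ Icc (0:ℝ) s := ⟨ht0, by nlinarith⟩
  have hGt_le : G t ≤ G 0 := hmono ⟨le_refl 0, hs0.trans hsT⟩ ⟨ht0, htmem.2.trans hsT⟩ ht0
  have hGtpos : 0 < G t := hGt_pos t htmem
  have hG0t : G 0 ^ (-η) ≤ G t ^ (-η) :=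
    Real.rpow_le_rpow_of_nonpos hGtpos hGt_le (by linarith)
  -- G 0 ^ (-η) ≥ 2
  have hG02 : (2:ℝ) ≤ G 0 ^ (-η) := by
    have h1 : δ ^ (-η) ≤ G 0 ^ (-η) := Real.rpow_le_rpow_of_nonpos hG0pos hδ (by linarith)
    have h2 : δ ^ (-η) = 2 := by
      rw [Real.rpow_neg hδpos.le, hδη]; norm_num
    linarith
  -- main lower bound on G s ^ (-η)
  have hmain : (η/8) * (G 0 ^ (-η) + s) ≤ G s ^ (-η) := by
    have hns : (s - 2)/2 ≤ (n:ℝ) := by linarith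
    nlinarith [hkey, hG0t, hG02, mul_le_mul_of_nonneg_right hns (le_of_lt (by positivity : (0:ℝ) < η/2))]
  -- invert
  have hA : (0:ℝ) < G 0 ^ (-η) + s := by
    have := Real.rpow_pos_of_pos hG0pos (-η); linarith
  have hup : G s ≤ ((η/8) * (G 0 ^ (-η) + s)) ^ (-1/η) := by
    have h1 : (G s ^ (-η)) ^ (-1/η) ≤ ((η/8) * (G 0 ^ (-η) + s)) ^ (-1/η) :=
      Real.rpow_le_rpow_of_nonpos (by positivity) hmain (by
        rw [neg_div]; simp only [Left.neg_nonpos_iff]; positivity)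
    have h2 : (G s ^ (-η)) ^ (-1/η) = G s := by
      rw [← Real.rpow_mul hGs.le, show (-η) * (-1/η) = 1 by field_simp, Real.rpow_one]
    rw [← h2]; exact h1
  have hfactor : ((η/8) * (G 0 ^ (-η) + s)) ^ (-1/η) =
      (8/η) ^ (1/η) * (G 0 ^ (-η) + s) ^ (-1/η) := by
    rw [Real.mul_rpow (by positivity) hA.le]
    congr 1
    rw [show (8/η : ℝ) = (η/8)⁻¹ by field_simp,
      Real.inv_rpow (by positivity : (0:ℝ) ≤ η/8),
      ← Real.rpow_neg (by positivity : (0:ℝ) ≤ η/8), neg_div]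
  rw [hfactor] at hup
  exact hup
end

section
/- Let f : [1, T] -> [0, infinity) be measurable, let eta in (0,1), gamma in (1, 1/eta), and A >= 1. Suppose that for every s in [1,T], the integral of f over [s, T] is at most (A + s)^{-1/eta}. Then the integral of s^gamma f(s) over [1, T] is at most C(gamma, eta) A^{1 - gamma eta} for a constant C(gamma, eta) depending only on gamma and eta. -/
open Set MeasureTheory

/-- Key real inequality for the dyadic term bound. -/
lemma dyadic_term_bound (η γ ε : ℝ) (hη0 : 0 < η) (hγ1 : 1 < γ) (hγlt : γ < 1/η)
    (hε : ε = (1/η - γ)/2) (A : ℝ) (hA : 1 ≤ A) (k : ℕ) :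
    ((2:ℝ) ^ (k+1)) ^ γ * (A + 2 ^ k) ^ (-1/η) ≤
      2 ^ γ * A ^ (1 - γ * η) * ((2:ℝ) ^ (-ε)) ^ k := by
  have hγη : γ * η < 1 := by
    have := mul_lt_mul_of_pos_right hγlt hη0
    rwa [one_div_mul_cancel hη0.ne'] at this
  have h2k1 : (1:ℝ) ≤ 2 ^ k := one_le_pow₀ one_le_two
  have h2k0 : (0:ℝ) < 2 ^ k := by positivity
  have hB0 : (0:ℝ) < A + 2 ^ k := by linarith
  have hε0 : 0 < ε := by rw [hε]; linarith
  have hsplit : (A + 2 ^ k) ^ (-1/η) =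
      (A + 2 ^ k) ^ (-(γ+ε)) * (A + 2 ^ k) ^ (γ + ε - 1/η) := by
    rw [← Real.rpow_add hB0]; ring_nf
  have h1 : (A + 2 ^ k) ^ (-(γ+ε)) ≤ ((2:ℝ) ^ k) ^ (-(γ+ε)) :=
    Real.rpow_le_rpow_of_nonpos h2k0 (by linarith) (by linarith)
  have h2 : (A + 2 ^ k) ^ (γ + ε - 1/η) ≤ 1 :=
    Real.rpow_le_one_of_one_le_of_nonpos (by linarith) (by rw [hε]; linarith)
  have hA1 : (1:ℝ) ≤ A ^ (1 - γ * η) := Real.one_le_rpow hA (by linarith)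
  have e1 : ((2:ℝ) ^ (k+1)) ^ γ = (2:ℝ) ^ ((((k+1) : ℕ) : ℝ) * γ) := by
    rw [← Real.rpow_natCast (2:ℝ) (k+1), ← Real.rpow_mul (by norm_num)]
  have e2 : ((2:ℝ) ^ k) ^ (-(γ+ε)) = (2:ℝ) ^ ((k : ℝ) * (-(γ+ε))) := by
    rw [← Real.rpow_natCast (2:ℝ) k, ← Real.rpow_mul (by norm_num)]
  have e3 : ((2:ℝ) ^ (-ε)) ^ k = (2:ℝ) ^ (-ε * (k : ℝ)) := by
    rw [← Real.rpow_natCast ((2:ℝ) ^ (-ε)) k, ← Real.rpow_mul (by norm_num)]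
  have hX : (0:ℝ) ≤ ((2:ℝ) ^ (k+1)) ^ γ := Real.rpow_nonneg (by positivity) _
  calc ((2:ℝ) ^ (k+1)) ^ γ * (A + 2 ^ k) ^ (-1/η)
      ≤ ((2:ℝ) ^ (k+1)) ^ γ * (((2:ℝ) ^ k) ^ (-(γ+ε)) * 1) := by
        rw [hsplit]
        exact mul_le_mul_of_nonneg_left
          (mul_le_mul h1 h2 (Real.rpow_nonneg hB0.le _) (Real.rpow_nonneg h2k0.le _)) hX
    _ = 2 ^ γ * ((2:ℝ) ^ (-ε)) ^ k := by
        rw [mul_one, e1, e2, e3, ← Real.rpow_add two_pos, ← Real.rpow_add two_pos]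
        congr 1
        push_cast
        ring
    _ ≤ 2 ^ γ * A ^ (1 - γ * η) * ((2:ℝ) ^ (-ε)) ^ k := by
        have h2γ : (0:ℝ) ≤ (2:ℝ) ^ γ := Real.rpow_nonneg (by norm_num) _
        have hrk : (0:ℝ) ≤ ((2:ℝ) ^ (-ε)) ^ k :=
          pow_nonneg (Real.rpow_nonneg (by norm_num) _) _
        have := mul_le_mul_of_nonneg_right (le_mul_of_one_le_right h2γ hA1) hrk
        linarith

/-- Weighted integral estimate: for `η ∈ (0,1)`, `γ ∈ (1,1/η)` there is a constant
`C(γ,η)` such that whenever `A ≥ 1` and `f : [1,T] → [0,∞)` is measurable with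
`∫_[s,T] f ≤ (A+s)^{-1/η}` for all `s ∈ [1,T]`, then
`∫_[1,T] s^γ f(s) ds ≤ C(γ,η) A^{1-γη}`. -/
theorem weighted_integral_estimate (η γ : ℝ) (hη : η ∈ Ioo (0:ℝ) 1)
    (hγ : γ ∈ Ioo 1 (1/η)) :
    ∃ C > (0:ℝ), ∀ (T A : ℝ) (f : ℝ → ℝ), 1 ≤ A → Measurable f →
      (∀ s ∈ Icc (1:ℝ) T, 0 ≤ f s) →
      (∀ s ∈ Icc (1:ℝ) T, (∫ x in Icc s T, f x) ≤ (A + s) ^ (-1/η)) →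
      (∫ s in Icc (1:ℝ) T, s ^ γ * f s) ≤ C * A ^ (1 - γ * η) := by
  obtain ⟨hη0, hη1⟩ := hη
  obtain ⟨hγ1, hγlt⟩ := hγ
  set ε := (1/η - γ)/2 with hε
  have hε0 : 0 < ε := by rw [hε]; linarith
  have hr1 : (2:ℝ) ^ (-ε) < 1 := Real.rpow_lt_one_of_one_lt_of_neg one_lt_two (by linarith)
  have hr0 : (0:ℝ) < 2 ^ (-ε) := Real.rpow_pos_of_pos two_pos _
  have h2γ : (0:ℝ) < 2 ^ γ := Real.rpow_pos_of_pos two_pos _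
  have hC0 : (0:ℝ) < 2 ^ γ * (1 - 2 ^ (-ε))⁻¹ := mul_pos h2γ (inv_pos.2 (by linarith))
  refine ⟨2 ^ γ * (1 - 2 ^ (-ε))⁻¹, hC0, ?_⟩
  intro T A f hA hf hf0 hyp
  have hγη : γ * η < 1 := by
    have := mul_lt_mul_of_pos_right hγlt hη0
    rwa [one_div_mul_cancel hη0.ne'] at this
  have hA0 : (0:ℝ) < A := by linarith
  have hApow : (0:ℝ) < A ^ (1 - γ * η) := Real.rpow_pos_of_pos hA0 _
  have hRHS0 : (0:ℝ) ≤ 2 ^ γ * (1 - 2 ^ (-ε))⁻¹ * A ^ (1 - γ * η) :=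
    (mul_pos hC0 hApow).le
  by_cases hint : IntegrableOn f (Icc 1 T) volume
  case neg =>
    have hng : ¬ IntegrableOn (fun s => s ^ γ * f s) (Icc 1 T) volume := by
      intro h
      refine hint (h.mono' hf.aestronglyMeasurable ?_)
      filter_upwards [ae_restrict_mem measurableSet_Icc] with s hs
      have h1s : (1:ℝ) ≤ s := hs.1
      have hsγ : (1:ℝ) ≤ s ^ γ := Real.one_le_rpow h1s (by linarith)
      have hfs := hf0 s hs
      rw [Real.norm_eq_abs, abs_of_nonneg hfs]
      nlinarith
    rw [integral_undef hng]
    exact hRHS0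
  case pos =>
    have hg_nonneg : 0 ≤ᵐ[volume.restrict (Icc 1 T)] fun s => s ^ γ * f s := by
      filter_upwards [ae_restrict_mem measurableSet_Icc] with s hs
      exact mul_nonneg (Real.rpow_nonneg (by linarith [hs.1]) _) (hf0 s hs)
    have hgm : Measurable fun s : ℝ => s ^ γ * f s :=
      ((Real.continuous_rpow_const (by linarith : (0:ℝ) ≤ γ)).measurable).mul hf
    rw [integral_eq_lintegral_of_nonneg_ae hg_nonneg hgm.aestronglyMeasurable]
    set S : ℕ → Set ℝ := fun k => Icc 1 T ∩ Ico ((2:ℝ)^k) (2^(k+1)) with hS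
    have key : (∫⁻ s in Icc (1:ℝ) T, ENNReal.ofReal (s ^ γ * f s)) ≤
        ENNReal.ofReal (2 ^ γ * (1 - 2 ^ (-ε))⁻¹ * A ^ (1 - γ * η)) := by
      have cover : Icc (1:ℝ) T ⊆ ⋃ k : ℕ, S k := by
        intro x hx
        obtain ⟨k, h1, h2⟩ := exists_nat_pow_near hx.1 (one_lt_two (α := ℝ))
        exact mem_iUnion.2 ⟨k, hx, h1, h2⟩
      have term : ∀ k : ℕ, (∫⁻ s in S k, ENNReal.ofReal (s ^ γ * f s)) ≤
          ENNReal.ofReal (2 ^ γ * A ^ (1 - γ * η)) * (ENNReal.ofReal ((2:ℝ) ^ (-ε)))^k := by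
        intro k
        have hmeas : MeasurableSet (S k) := measurableSet_Icc.inter measurableSet_Ico
        have h2k1 : (1:ℝ) ≤ 2 ^ k := one_le_pow₀ one_le_two
        have hsub : S k ⊆ Icc ((2:ℝ)^k) T := fun x hx => ⟨hx.2.1, hx.1.2⟩
        by_cases hk : (2:ℝ)^k ≤ T
        · calc (∫⁻ s in S k, ENNReal.ofReal (s ^ γ * f s))
              ≤ ∫⁻ s in S k, ENNReal.ofReal (((2:ℝ)^(k+1))^γ) * ENNReal.ofReal (f s) := by
                refine setLIntegral_mono' hmeas fun s hs => ?_
                rw [← ENNReal.ofReal_mul (Real.rpow_nonneg (by positivity) _)]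
                apply ENNReal.ofReal_le_ofReal
                have hs0 : (0:ℝ) ≤ s := le_trans zero_le_one hs.1.1
                have hsle : s ^ γ ≤ ((2:ℝ)^(k+1))^γ :=
                  Real.rpow_le_rpow hs0 hs.2.2.le (by linarith : (0:ℝ) ≤ γ)
                exact mul_le_mul_of_nonneg_right hsle (hf0 s hs.1)
            _ = ENNReal.ofReal (((2:ℝ)^(k+1))^γ) * ∫⁻ s in S k, ENNReal.ofReal (f s) :=
                lintegral_const_mul _ hf.ennreal_ofReal
            _ ≤ ENNReal.ofReal (((2:ℝ)^(k+1))^γ) *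
                ∫⁻ s in Icc ((2:ℝ)^k) T, ENNReal.ofReal (f s) :=
                mul_le_mul_right (lintegral_mono_set hsub) _
            _ = ENNReal.ofReal (((2:ℝ)^(k+1))^γ) *
                ENNReal.ofReal (∫ x in Icc ((2:ℝ)^k) T, f x) := by
                rw [ofReal_integral_eq_lintegral_ofReal
                  (hint.mono_set (Icc_subset_Icc_left h2k1)) ?_]
                filter_upwards [ae_restrict_mem measurableSet_Icc] with s hs
                exact hf0 s ⟨le_trans h2k1 hs.1, hs.2⟩
            _ ≤ ENNReal.ofReal (((2:ℝ)^(k+1))^γ) * ENNReal.ofReal ((A + 2^k) ^ (-1/η)) :=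
                mul_le_mul_right (ENNReal.ofReal_le_ofReal (hyp _ ⟨h2k1, hk⟩)) _
            _ ≤ _ := by
                rw [← ENNReal.ofReal_mul (Real.rpow_nonneg (by positivity) _),
                  ← ENNReal.ofReal_pow hr0.le, ← ENNReal.ofReal_mul (by positivity)]
                exact ENNReal.ofReal_le_ofReal
                  (dyadic_term_bound η γ ε hη0 hγ1 hγlt hε A hA k)
        · have hSk : S k = ∅ := by
            refine eq_empty_iff_forall_notMem.2 fun x hx => hk (le_trans hx.2.1 hx.1.2)
          rw [hSk]
          simp
      calc (∫⁻ s in Icc (1:ℝ) T, ENNReal.ofReal (s ^ γ * f s))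
          ≤ ∫⁻ s in ⋃ k : ℕ, S k, ENNReal.ofReal (s ^ γ * f s) := lintegral_mono_set cover
        _ ≤ ∑' k : ℕ, ∫⁻ s in S k, ENNReal.ofReal (s ^ γ * f s) := lintegral_iUnion_le _ _
        _ ≤ ∑' k : ℕ, ENNReal.ofReal (2 ^ γ * A ^ (1 - γ * η)) *
              (ENNReal.ofReal ((2:ℝ) ^ (-ε)))^k := ENNReal.tsum_le_tsum term
        _ = ENNReal.ofReal (2 ^ γ * A ^ (1 - γ * η)) *
              (1 - ENNReal.ofReal ((2:ℝ) ^ (-ε)))⁻¹ := by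
            rw [ENNReal.tsum_mul_left, ENNReal.tsum_geometric]
        _ = ENNReal.ofReal (2 ^ γ * (1 - 2 ^ (-ε))⁻¹ * A ^ (1 - γ * η)) := by
            rw [← ENNReal.ofReal_one, ← ENNReal.ofReal_sub _ hr0.le,
              ← ENNReal.ofReal_inv_of_pos (by linarith), ← ENNReal.ofReal_mul (by positivity)]
            congr 1
            ring
    calc (∫⁻ s in Icc (1:ℝ) T, ENNReal.ofReal (s ^ γ * f s)).toReal
        ≤ (ENNReal.ofReal (2 ^ γ * (1 - 2 ^ (-ε))⁻¹ * A ^ (1 - γ * η))).toReal :=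
          ENNReal.toReal_mono ENNReal.ofReal_ne_top key
      _ = _ := ENNReal.toReal_ofReal hRHS0
end

section
/- For an integer m >= 1, define Theta(m) = (4 pi)^{-m/2} * (2m)^{m/2} * e^{-m/2} * sigma_m, where sigma_m is the m-dimensional Hausdorff measure of the unit sphere S^m in R^{m+1}. Then the sequence Theta(m) is strictly decreasing in m, and sqrt(2) < Theta(m) < 2 for all m >= 1. -/
/-!
Squaring removes the radicals: `Θ(m)² = 4π (m / 2e)^m / Γ((m + 1) / 2)²`, and `Θ(0) = 2`.

Strict decrease amounts to `(m + 1)^(m + 1) Γ((m + 1) / 2)² < 2e m^m Γ((m + 2) / 2)²`, the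
product of Watson's inequality `Γ(x)² (4x - 1) < 4 Γ(x + 1/2)²` and the elementary
`2 (m + 1)^(m + 1) < e (2m + 1) m^m`. Watson's inequality holds because the quotient
`Γ(x)² (4x - 1) / Γ(x + 1/2)²` strictly increases under `x ↦ x + 1`, while log-convexity of `Γ`
bounds it by `4 + 1 / (x - 1/2)`.

The upper bound is then `Θ(m) < Θ(0) = 2`. For the lower bound, the duplication formula turns
`Θ(m)² Θ(m + 1)²` into an expression in `m!`, which by Stirling's formula tends to `4`; being
decreasing it stays `≥ 4`, so `Θ(m)⁴ > Θ(m)² Θ(m + 1)² ≥ 4`.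
-/

open Filter Finset Real Topology
open scoped Nat

namespace Real

theorem log_one_add_le_sum_range {t : ℝ} (ht : 0 ≤ t) (n : ℕ) :
    log (1 + t) ≤ ∑ k ∈ range (2 * n + 1), (-1) ^ k * t ^ (k + 1) / (k + 1) := by
  set F : ℝ → ℝ := fun s ↦
    ∑ k ∈ range (2 * n + 1), (-1) ^ k * s ^ (k + 1) / (k + 1) - log (1 + s) with hF
  have hderiv : ∀ s, 0 ≤ s → HasDerivAt F (s ^ (2 * n + 1) / (1 + s)) s := by
    intro s hs
    have hpoly :
        HasDerivAt (fun u : ℝ ↦ ∑ k ∈ range (2 * n + 1), (-1) ^ k * u ^ (k + 1) / (k + 1))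
        (∑ k ∈ range (2 * n + 1), (-s) ^ k) s := by
      refine (HasDerivAt.fun_sum fun k _ ↦
        ((hasDerivAt_pow (k + 1) s).const_mul _).div_const _).congr_deriv (sum_congr rfl ?_)
      intro k _
      rw [neg_pow s]
      push_cast
      field_simp
    have hgeom : (∑ k ∈ range (2 * n + 1), (-s) ^ k) * (1 + s) = 1 + s ^ (2 * n + 1) := by
      have := geom_sum_mul (-s) (2 * n + 1)
      rw [(odd_two_mul_add_one n).neg_pow] at this
      linarith
    have hlog : HasDerivAt (fun u ↦ log (1 + u)) (1 / (1 + s)) s := by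
      simpa using ((hasDerivAt_id s).const_add 1).log (by positivity)
    refine (hpoly.sub hlog).congr_deriv ?_
    field_simp
    linarith
  have hmono : MonotoneOn F (Set.Ici 0) :=
    monotoneOn_of_hasDerivWithinAt_nonneg (convex_Ici 0)
      (fun s hs ↦ (hderiv s hs).continuousAt.continuousWithinAt)
      (fun s hs ↦ (hderiv s (interior_subset hs)).hasDerivWithinAt)
      (fun s hs ↦ by have := interior_subset hs; simp only [Set.mem_Ici] at this; positivity)
  simpa [hF] using hmono Set.self_mem_Ici ht ht

/- Sharp to second order: `(1 + 1/x)^x = e (1 - 1/(2x) + 11/(24x²) - …)` against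
`e (1 + 1/(2x + 1))⁻¹ = e (1 - 1/(2x) + 12/(24x²) - …)`; a fifth-order Taylor bound suffices
from `x = 2` on. -/
theorem mul_log_one_add_inv_add_log_lt_one {x : ℝ} (hx : 2 ≤ x) :
    x * log (1 + x⁻¹) + log (1 + (2 * x + 1)⁻¹) < 1 := by
  have h₁ := log_one_add_le_sum_range (t := x⁻¹) (by positivity) 2
  have h₂ := log_one_add_le_sum_range (t := (2 * x + 1)⁻¹) (by positivity) 1
  norm_num [sum_range_succ] at h₁ h₂
  have hx₀ : 0 < x := by linarith
  have hpoly : -20 * x ^ 5 - 10 * x ^ 4 + 6 * x ^ 3 + 74 * x ^ 2 + 57 * x + 12 < 0 := by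
    nlinarith [pow_le_pow_left₀ (by norm_num) hx 2, pow_le_pow_left₀ (by norm_num) hx 3,
      pow_le_pow_left₀ (by norm_num) hx 4]
  calc x * log (1 + x⁻¹) + log (1 + (2 * x + 1)⁻¹)
      ≤ x * (x⁻¹ + -(x ^ 2)⁻¹ / 2 + (x ^ 3)⁻¹ / 3 + -(x ^ 4)⁻¹ / 4 + (x ^ 5)⁻¹ / 5)
        + ((2 * x + 1)⁻¹ + -((2 * x + 1) ^ 2)⁻¹ / 2 + ((2 * x + 1) ^ 3)⁻¹ / 3) :=
        add_le_add (mul_le_mul_of_nonneg_left h₁ hx₀.le) h₂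
    _ = 1 + (-20 * x ^ 5 - 10 * x ^ 4 + 6 * x ^ 3 + 74 * x ^ 2 + 57 * x + 12)
        / (60 * x ^ 4 * (2 * x + 1) ^ 3) := by
      field_simp
      ring
    _ < 1 := add_lt_of_neg_right _ (div_neg_of_neg_of_pos hpoly (by positivity))

theorem two_mul_add_one_pow_succ_lt (m : ℕ) :
    2 * ((m : ℝ) + 1) ^ (m + 1) < exp 1 * (2 * m + 1) * m ^ m := by
  obtain hm | hm : m ≤ 1 ∨ 2 ≤ m := by omega
  · interval_cases m <;> norm_num <;> linarith [exp_one_gt_d9]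
  have hx : (2 : ℝ) ≤ m := by exact_mod_cast hm
  have hx₀ : (m : ℝ) ≠ 0 := by positivity
  have hexp := exp_lt_exp.2 (mul_log_one_add_inv_add_log_lt_one hx)
  rw [exp_add, ← log_pow, exp_log (by positivity), exp_log (by positivity)] at hexp
  have hform : (1 + (m : ℝ)⁻¹) ^ m * (1 + (2 * (m : ℝ) + 1)⁻¹) =
      2 * ((m : ℝ) + 1) ^ (m + 1) / ((2 * m + 1) * m ^ m) := by
    rw [show 1 + (m : ℝ)⁻¹ = (m + 1) / m by field_simp, div_pow]
    field_simp
    ring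
  rwa [hform, div_lt_iff₀ (by positivity), ← mul_assoc] at hexp

noncomputable def watsonQuotient (x : ℝ) : ℝ :=
  Gamma x ^ 2 * (4 * x - 1) / Gamma (x + 1 / 2) ^ 2

theorem mul_Gamma_add_half_sq_le {x : ℝ} (hx : 0 < x) :
    x * Gamma (x + 1 / 2) ^ 2 ≤ Gamma (x + 1) ^ 2 := by
  have hconv := Gamma_mul_add_mul_le_rpow_Gamma_mul_rpow_Gamma hx (by linarith : 0 < x + 1)
    (by norm_num : (0 : ℝ) < 1 / 2) (by norm_num : (0 : ℝ) < 1 / 2) (by norm_num)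
  rw [show 1 / 2 * x + 1 / 2 * (x + 1) = x + 1 / 2 by ring, ← sqrt_eq_rpow, ← sqrt_eq_rpow,
    ← sqrt_mul (Gamma_pos_of_pos hx).le] at hconv
  have hsq := pow_le_pow_left₀ (Gamma_pos_of_pos (by linarith)).le hconv 2
  rw [sq_sqrt (mul_pos (Gamma_pos_of_pos hx) (Gamma_pos_of_pos (by linarith))).le] at hsq
  calc x * Gamma (x + 1 / 2) ^ 2 ≤ x * (Gamma x * Gamma (x + 1)) := by gcongr
    _ = Gamma (x + 1) ^ 2 := by rw [Gamma_add_one hx.ne']; ring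

theorem watsonQuotient_lt_add_one {x : ℝ} (hx : 0 < x) :
    watsonQuotient x < watsonQuotient (x + 1) := by
  have hΓ := Gamma_pos_of_pos hx
  have hΓ' := Gamma_pos_of_pos (by linarith : 0 < x + 1 / 2)
  unfold watsonQuotient
  rw [Gamma_add_one hx.ne', show x + 1 + 1 / 2 = x + 1 / 2 + 1 by ring,
    Gamma_add_one (by positivity), div_lt_div_iff₀ (by positivity) (by positivity)]
  have hgap : (x * Gamma x) ^ 2 * (4 * (x + 1) - 1) * Gamma (x + 1 / 2) ^ 2
      - Gamma x ^ 2 * (4 * x - 1) * ((x + 1 / 2) * Gamma (x + 1 / 2)) ^ 2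
      = (Gamma x * Gamma (x + 1 / 2)) ^ 2 / 4 := by ring
  nlinarith [pow_pos (mul_pos hΓ hΓ') 2]

theorem watsonQuotient_add_one_le {x : ℝ} (hx : 0 < x) :
    watsonQuotient (x + 1) ≤ 4 + (x + 1 / 2)⁻¹ := by
  have h := mul_Gamma_add_half_sq_le (by positivity : 0 < x + 1 / 2)
  rw [show x + 1 / 2 + 1 / 2 = x + 1 by ring, show x + 1 / 2 + 1 = x + 1 + 1 / 2 by ring] at h
  have hΓ := Gamma_pos_of_pos (by positivity : 0 < x + 1 + 1 / 2)
  unfold watsonQuotient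
  rw [div_le_iff₀ (by positivity)]
  have hform : (4 + (x + 1 / 2)⁻¹) * Gamma (x + 1 + 1 / 2) ^ 2
      = (4 * (x + 1) - 1) * (Gamma (x + 1 + 1 / 2) ^ 2 / (x + 1 / 2)) := by
    field_simp
    ring
  rw [hform, mul_comm]
  gcongr
  · linarith
  · rw [le_div_iff₀ (by positivity)]
    linarith

theorem watsonQuotient_lt_four {x : ℝ} (hx : 0 < x) : watsonQuotient x < 4 := by
  have hchain : ∀ n : ℕ, watsonQuotient (x + 1) ≤ watsonQuotient (x + n + 1) := by
    intro n
    induction n with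
    | zero => simp
    | succ n ih =>
      rw [show x + (n + 1 : ℕ) + 1 = x + n + 1 + 1 by push_cast; ring]
      exact ih.trans (watsonQuotient_lt_add_one (by positivity)).le
  have hlim : Tendsto (fun n : ℕ ↦ 4 + (x + n + 1 / 2)⁻¹) atTop (𝓝 4) := by
    have h := ((tendsto_atTop_add_const_right _ (1 / 2)
      (tendsto_atTop_add_const_left _ x tendsto_natCast_atTop_atTop)).inv_tendsto_atTop).const_add 4
    rwa [add_zero] at h
  have hbound : watsonQuotient (x + 1) ≤ 4 :=
    ge_of_tendsto' hlim fun n ↦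
      (hchain n).trans (watsonQuotient_add_one_le (x := x + n) (by positivity))
  exact (watsonQuotient_lt_add_one hx).trans_le hbound

theorem Gamma_sq_mul_lt_four_mul_Gamma_add_half_sq {x : ℝ} (hx : 0 < x) :
    Gamma x ^ 2 * (4 * x - 1) < 4 * Gamma (x + 1 / 2) ^ 2 := by
  have h := watsonQuotient_lt_four hx
  rwa [watsonQuotient, div_lt_iff₀ (pow_pos (Gamma_pos_of_pos (by positivity)) 2)] at h

theorem rpow_natCast_div_two_sq {b : ℝ} (hb : 0 ≤ b) (n : ℕ) :
    (b ^ ((n : ℝ) / 2)) ^ 2 = b ^ n := by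
  rw [← rpow_natCast, ← rpow_mul hb]
  norm_num

theorem Gamma_natCast_succ_add_one_div_two (m : ℕ) :
    Gamma (((m + 1 : ℕ) + 1) / 2) = Gamma ((m + 1) / 2 + 1 / 2) := by
  congr 1
  push_cast
  ring

theorem Gamma_natCast_add_one_div_two_mul_Gamma_add_half (m : ℕ) :
    Gamma ((m + 1) / 2) * Gamma ((m + 1) / 2 + 1 / 2) = m ! * √π / 2 ^ m := by
  rw [Gamma_mul_Gamma_add_half, show 2 * (((m : ℝ) + 1) / 2) = m + 1 by ring,
    Gamma_nat_eq_factorial, show (1 : ℝ) - (m + 1) = -m by ring, rpow_neg zero_le_two,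
    rpow_natCast]
  ring

end Real

noncomputable def sphereEntropySq (m : ℕ) : ℝ :=
  4 * π * (m / (2 * exp 1)) ^ m / Gamma ((m + 1) / 2) ^ 2

theorem sphereEntropySq_nonneg (m : ℕ) : 0 ≤ sphereEntropySq m := by
  unfold sphereEntropySq
  positivity

theorem sphereEntropySq_zero : sphereEntropySq 0 = 4 := by
  simp only [sphereEntropySq, Nat.cast_zero, zero_add, pow_zero, mul_one, Gamma_one_half_eq,
    sq_sqrt pi_pos.le]
  field_simp

theorem gaussianArea_sq (m : ℕ) :
    ((4 * π) ^ (-(m : ℝ) / 2) * (2 * (m : ℝ)) ^ ((m : ℝ) / 2) * exp (-(m : ℝ) / 2) *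
      (2 * π ^ (((m : ℝ) + 1) / 2) / Gamma (((m : ℝ) + 1) / 2))) ^ 2 = sphereEntropySq m := by
  have hΓ := Gamma_pos_of_pos (by positivity : (0 : ℝ) < (m + 1) / 2)
  rw [neg_div, rpow_neg (by positivity), show (m : ℝ) + 1 = ((m + 1 : ℕ) : ℝ) by push_cast; ring]
  simp only [mul_pow, div_pow, inv_pow, ← exp_nat_mul,
    rpow_natCast_div_two_sq (by positivity : (0 : ℝ) ≤ 4 * π),
    rpow_natCast_div_two_sq (by positivity : (0 : ℝ) ≤ 2 * m), rpow_natCast_div_two_sq pi_pos.le]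
  rw [show ((2 : ℕ) : ℝ) * -((m : ℝ) / 2) = -m by push_cast; ring, exp_neg, ← exp_one_pow,
    sphereEntropySq, show (4 : ℝ) = 2 * 2 by norm_num]
  push_cast
  simp only [div_pow, mul_pow]
  field_simp
  ring

theorem sphereEntropySq_succ_lt (m : ℕ) : sphereEntropySq (m + 1) < sphereEntropySq m := by
  unfold sphereEntropySq
  rw [Gamma_natCast_succ_add_one_div_two]
  push_cast
  set Γ₀ := Gamma ((m + 1) / 2)
  set Γ₁ := Gamma ((m + 1) / 2 + 1 / 2)
  have hΓ₀ : 0 < Γ₀ := Gamma_pos_of_pos (by positivity)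
  have hΓ₁ : 0 < Γ₁ := Gamma_pos_of_pos (by positivity)
  have hW : Γ₀ ^ 2 * (2 * m + 1) < 4 * Γ₁ ^ 2 := by
    have h := Gamma_sq_mul_lt_four_mul_Gamma_add_half_sq (by positivity : (0 : ℝ) < (m + 1) / 2)
    rwa [show 4 * (((m : ℝ) + 1) / 2) - 1 = 2 * m + 1 by ring] at h
  have key : ((m : ℝ) + 1) ^ (m + 1) * Γ₀ ^ 2 < 2 * exp 1 * m ^ m * Γ₁ ^ 2 := by
    refine lt_of_mul_lt_mul_right ?_ (by positivity : (0 : ℝ) ≤ 2 * m + 1)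
    calc ((m : ℝ) + 1) ^ (m + 1) * Γ₀ ^ 2 * (2 * m + 1)
        = ((m : ℝ) + 1) ^ (m + 1) * (Γ₀ ^ 2 * (2 * m + 1)) := by ring
      _ < ((m : ℝ) + 1) ^ (m + 1) * (4 * Γ₁ ^ 2) := by gcongr
      _ = 2 * (2 * ((m : ℝ) + 1) ^ (m + 1)) * Γ₁ ^ 2 := by ring
      _ < 2 * (exp 1 * (2 * m + 1) * m ^ m) * Γ₁ ^ 2 := by
        have := two_mul_add_one_pow_succ_lt m
        gcongr ?_ * _
        linarith
      _ = 2 * exp 1 * m ^ m * Γ₁ ^ 2 * (2 * m + 1) := by ring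
  rw [div_lt_div_iff₀ (by positivity) (by positivity), div_pow, div_pow]
  calc 4 * π * (((m : ℝ) + 1) ^ (m + 1) / (2 * exp 1) ^ (m + 1)) * Γ₀ ^ 2
      = 4 * π / (2 * exp 1) ^ (m + 1) * (((m : ℝ) + 1) ^ (m + 1) * Γ₀ ^ 2) := by ring
    _ < 4 * π / (2 * exp 1) ^ (m + 1) * (2 * exp 1 * m ^ m * Γ₁ ^ 2) :=
      mul_lt_mul_of_pos_left key (by positivity)
    _ = 4 * π * ((m : ℝ) ^ m / (2 * exp 1) ^ m) * Γ₁ ^ 2 := by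
      rw [pow_succ]
      field_simp

theorem sphereEntropySq_strictAnti : StrictAnti sphereEntropySq :=
  strictAnti_nat_of_succ_lt sphereEntropySq_succ_lt

theorem sphereEntropySq_mul_succ {m : ℕ} (hm : m ≠ 0) :
    sphereEntropySq m * sphereEntropySq (m + 1) =
      4 * π / (exp 1 * Stirling.stirlingSeq m ^ 2) * (1 + 1 / m) ^ (m + 1) := by
  have hfac : (m ! : ℝ) = Stirling.stirlingSeq m * √(2 * m) * (m / exp 1) ^ m := by
    rw [Stirling.stirlingSeq]
    field_simp
  have hprod : sphereEntropySq m * sphereEntropySq (m + 1) = 16 * π ^ 2 * (m / (2 * exp 1)) ^ m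
      * ((m + 1) / (2 * exp 1)) ^ (m + 1)
      / (Gamma ((m + 1) / 2) * Gamma ((m + 1) / 2 + 1 / 2)) ^ 2 := by
    unfold sphereEntropySq
    rw [Gamma_natCast_succ_add_one_div_two]
    push_cast
    ring
  rw [hprod, Gamma_natCast_add_one_div_two_mul_Gamma_add_half, hfac,
    show 1 + 1 / (m : ℝ) = (m + 1) / m by field_simp]
  simp only [div_pow, mul_pow, sq_sqrt pi_pos.le, sq_sqrt (by positivity : (0 : ℝ) ≤ 2 * m)]
  field_simp
  ring

theorem tendsto_sphereEntropySq_mul_succ :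
    Tendsto (fun m ↦ sphereEntropySq m * sphereEntropySq (m + 1)) atTop (𝓝 4) := by
  have hstirling : Tendsto (fun m ↦ 4 * π / (exp 1 * Stirling.stirlingSeq m ^ 2)) atTop
      (𝓝 (4 * π / (exp 1 * √π ^ 2))) :=
    tendsto_const_nhds.div (tendsto_const_nhds.mul (Stirling.tendsto_stirlingSeq_sqrt_pi.pow 2))
      (by positivity)
  have hexp : Tendsto (fun m : ℕ ↦ (1 + 1 / (m : ℝ)) ^ (m + 1)) atTop (𝓝 (exp 1)) := by
    simp_rw [pow_succ]
    simpa using (tendsto_one_add_div_pow_exp 1).mul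
      (tendsto_one_div_atTop_nhds_zero_nat.const_add (1 : ℝ))
  have hlim := hstirling.mul hexp
  rw [sq_sqrt pi_pos.le, show 4 * π / (exp 1 * π) * exp 1 = 4 by field_simp] at hlim
  refine hlim.congr' ?_
  filter_upwards [eventually_ne_atTop 0] with m hm
  rw [sphereEntropySq_mul_succ hm]

theorem two_lt_sphereEntropySq (m : ℕ) : 2 < sphereEntropySq m := by
  have hanti : Antitone fun m ↦ sphereEntropySq m * sphereEntropySq (m + 1) :=
    antitone_nat_of_succ_le fun n ↦ mul_le_mul (sphereEntropySq_succ_lt n).le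
      (sphereEntropySq_succ_lt (n + 1)).le (sphereEntropySq_nonneg _) (sphereEntropySq_nonneg _)
  have h4 := hanti.le_of_tendsto tendsto_sphereEntropySq_mul_succ m
  nlinarith [sphereEntropySq_succ_lt m, sphereEntropySq_nonneg (m + 1)]

/-- Monotonicity of the Gaussian areas of self-shrinking spheres (Stone): with
`Θ(m) = (4π)^{-m/2} (2m)^{m/2} e^{-m/2} σ_m`, where
`σ_m = 2 π^{(m+1)/2} / Γ((m+1)/2)` is the `m`-dimensional measure of the unit sphere
`S^m ⊆ ℝ^{m+1}`, the sequence `Θ(m)` is strictly decreasing for `m ≥ 1` and satisfies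
`√2 < Θ(m) < 2`. -/
theorem shrinking_sphere_entropy_monotone (Θ : ℕ → ℝ)
    (hΘ : ∀ m : ℕ, Θ m =
      (4 * Real.pi) ^ (-(m:ℝ)/2) * (2 * (m:ℝ)) ^ ((m:ℝ)/2) * Real.exp (-(m:ℝ)/2) *
        (2 * Real.pi ^ (((m:ℝ) + 1)/2) / Real.Gamma (((m:ℝ) + 1)/2))) :
    (∀ m : ℕ, 1 ≤ m → Θ (m+1) < Θ m) ∧
    (∀ m : ℕ, 1 ≤ m → Real.sqrt 2 < Θ m ∧ Θ m < 2) := by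
  have hsqrt : ∀ m, Θ m = √(sphereEntropySq m) := fun m ↦ by
    rw [← gaussianArea_sq, sqrt_sq, hΘ]
    have := Gamma_pos_of_pos (by positivity : (0 : ℝ) < (m + 1) / 2)
    positivity
  have hmono : StrictAnti Θ := fun a b hab ↦ by
    rw [hsqrt, hsqrt]
    exact sqrt_lt_sqrt (sphereEntropySq_nonneg b) (sphereEntropySq_strictAnti hab)
  refine ⟨fun m _ ↦ hmono m.lt_succ_self, fun m hm ↦ ⟨?_, ?_⟩⟩
  · rw [hsqrt]
    exact sqrt_lt_sqrt zero_le_two (two_lt_sphereEntropySq m)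
  · calc Θ m < Θ 0 := hmono (by omega)
      _ = 2 := by
        rw [hsqrt, sphereEntropySq_zero, show (4 : ℝ) = 2 ^ 2 by norm_num, sqrt_sq zero_le_two]
end
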